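/- Let F be a presheaf of types on a topological space B, and equip the disjoint union Et(F) of the stalks of F with the topology generated by the sets Im(s_U) = { (x, germ of s at x) | x ∈ U } for U open in B and s ∈ F(U). Then the canonical projection π_F : Et(F) → B sending (x, g) to x is a local homeomorphism. -/

import Mathlib

open CategoryTheory TopologicalSpace Opposite

universe u

/-- The disjoint union of the stalks of a presheaf `F` over all points of the base space. -/
def EtSpace {B : TopCat.{u}} (F : B.Presheaf (Type u)) : Type u :=
  Σ x : B, F.stalk x

/-- The image `Im(s_U)` of the germ map of a section `s ∈ F(U)`:
the set of pairs `(x, germ of s at x)` for `x ∈ U`. -/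
def imSet {B : TopCat.{u}} (F : B.Presheaf (Type u)) (U : Opens B) (s : F.obj (op U)) :
    Set (EtSpace F) :=
  { p | ∃ hx : p.1 ∈ U, p.2 = F.germ U p.1 hx s }

/-- The étalé topology on the disjoint union of stalks: the topology generated by the
images of the germ maps of sections of `F`. -/
def etTopology {B : TopCat.{u}} (F : B.Presheaf (Type u)) :
    TopologicalSpace (EtSpace F) :=
  TopologicalSpace.generateFrom
    { S | ∃ (U : Opens B) (s : F.obj (op U)), S = imSet F U s }

/-!
A section `s ∈ F(U)` gives a section `y ↦ (y, germ of s at y)` of the projection over `U`, with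
open image `Im(s_U)`. It is continuous because the locus where two sections have equal germs is
open: equal germs at a point come from equal restrictions to a neighbourhood. Hence the projection
restricted to `Im(s_U)` is a homeomorphism onto `U`, and every point of `Et(F)` lies in some
`Im(s_U)`.
-/

attribute [local instance] etTopology

namespace EtSpace

variable {B : TopCat.{u}} (F : B.Presheaf (Type u))

theorem isOpen_imSet (U : Opens B) (s : F.obj (op U)) : IsOpen (imSet F U s) :=
  isOpen_generateFrom_of_mem ⟨U, s, rfl⟩

theorem continuous_proj : Continuous (fun p : EtSpace F => p.1) := by
  refine continuous_def.mpr fun W hW => isOpen_iff_forall_mem_open.mpr fun p hp => ?_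
  obtain ⟨U, hUW, hpU, s, hs⟩ := F.exists_le_germ_eq p.2 (V := ⟨W, hW⟩) hp
  exact ⟨imSet F U s, fun q hq => hUW hq.1, isOpen_imSet F U s, hpU, hs.symm⟩

variable {F} in
theorem isOpen_setOf_germ_eq {U V : Opens B} (s : F.obj (op U)) (t : F.obj (op V)) :
    IsOpen {x : B | ∃ (hU : x ∈ U) (hV : x ∈ V), F.germ U x hU s = F.germ V x hV t} := by
  refine isOpen_iff_forall_mem_open.mpr ?_
  rintro x ⟨hU, hV, hst⟩
  obtain ⟨W, hxW, iU, iV, hW⟩ := F.germ_eq x hU hV s t hst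
  exact ⟨W, fun y hy => ⟨iU.le hy, iV.le hy, F.germ_ext W hy iU iV hW⟩, W.isOpen, hxW⟩

noncomputable def germSection (U : Opens B) (s : F.obj (op U)) (y : U) : EtSpace F :=
  ⟨y, F.germ U y y.2 s⟩

theorem continuous_germSection (U : Opens B) (s : F.obj (op U)) :
    Continuous (germSection F U s) := by
  refine continuous_generateFrom_iff.mpr ?_
  rintro _ ⟨V, t, rfl⟩
  refine isOpen_induced_iff.mpr ⟨_, isOpen_setOf_germ_eq s t, ?_⟩
  ext y
  exact ⟨fun ⟨_, hV, hst⟩ => ⟨hV, hst⟩, fun ⟨hV, hst⟩ => ⟨y.2, hV, hst⟩⟩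

noncomputable def imSetHomeomorph (U : Opens B) (s : F.obj (op U)) : imSet F U s ≃ₜ U where
  toFun q := ⟨q.1.1, q.2.1⟩
  invFun y := ⟨germSection F U s y, y.2, rfl⟩
  left_inv := by
    rintro ⟨⟨x, g⟩, hx, hg⟩
    exact Subtype.ext (Sigma.ext rfl (heq_of_eq hg.symm))
  right_inv _ := rfl
  continuous_toFun := ((continuous_proj F).comp continuous_subtype_val).subtype_mk _
  continuous_invFun := (continuous_germSection F U s).subtype_mk _

end EtSpace

/-- The canonical projection from the space of germs of a presheaf of types to the base
space is a local homeomorphism. -/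
theorem etale_projection_isLocalHomeomorph
    {B : TopCat.{u}} (F : B.Presheaf (Type u)) :
    letI : TopologicalSpace (EtSpace F) := etTopology F
    IsLocalHomeomorph (fun p : EtSpace F => p.1) := by
  rw [isLocalHomeomorph_iff_isOpenEmbedding_restrict]
  intro p
  obtain ⟨U, hpU, s, hs⟩ := F.exists_germ_eq p.2
  exact ⟨imSet F U s, (EtSpace.isOpen_imSet F U s).mem_nhds ⟨hpU, hs.symm⟩,
    U.isOpen.isOpenEmbedding_subtypeVal.comp (EtSpace.imSetHomeomorph F U s).isOpenEmbedding⟩
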